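/- Let V : ℕ → ℤ[T,T⁻¹] satisfy the Jones recurrence V(m+2) = (T³ − T)·V(m+1) + T⁴·V(m) for all m. Suppose V(0) ≠ 0, the pair (V(0), V(1)) is critical (deg V(1) = 1 + deg V(0)), the sum of the leading coefficients of V(0) and V(1) is 0, and deg V(2) = 2 + deg V(1). Then for every m ≥ 1 the pair (V(m), V(m+1)) is stable, and for every m ≥ 2, deg V(m) = deg V(2) + 3·(m − 2). -/

import Mathlib

/-- The degree of a Laurent polynomial `f`, viewed as a finitely supported function
`ℤ → ℤ`: the maximum of its support in `WithBot ℤ` (so `jdeg 0 = ⊥`). -/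
noncomputable def jdeg (f : LaurentPolynomial ℤ) : WithBot ℤ :=
  (AddMonoidAlgebra.coeff f : ℤ →₀ ℤ).support.max

/-- The leading coefficient of a Laurent polynomial: its coefficient at `jdeg f`
(for `f ≠ 0`; by convention `jcoeff 0 = 0`). -/
noncomputable def jcoeff (f : LaurentPolynomial ℤ) : ℤ :=
  (AddMonoidAlgebra.coeff f : ℤ →₀ ℤ) (WithBot.unbotD 0 ((AddMonoidAlgebra.coeff f : ℤ →₀ ℤ).support.max))

/-! If `(f, g)` is stable, then in `(T³ - T) g + T⁴ f` the top term `T³ g` has degree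
`3 + deg g`, strictly above `deg (T g) = 1 + deg g` and `deg (T⁴ f) = 3 + (1 + deg f)`; so the
next term has degree `deg g + 3`, and `(g, (T³ - T) g + T⁴ f)` is stable again. In Case 2a the
pair `(V 1, V 2)` is stable from the outset: `deg V 2 = 2 + deg V 1` with `V 1 ≠ 0`, because
`deg V 1 = 1 + deg V 0` and `V 0 ≠ 0`. -/

open LaurentPolynomial

namespace LaurentPolynomial

variable {R : Type*}

theorem degree_T_mul [Semiring R] [Nontrivial R] (n : ℤ) (f : R[T;T⁻¹]) :
    (T n * f).degree = n + f.degree := by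
  rw [degree, degree, T, AddMonoidAlgebra.support_coeff_single_mul f 1 (by simp) n,
    Finset.max_eq_sup_coe, Finset.max_eq_sup_coe, Finset.sup_map,
    Finset.apply_sup_eq_sup_comp_of_linearOrder (f := WithBot.some) ((n : WithBot ℤ) + ·)
      (fun _ _ h ↦ add_le_add_right h _) (WithBot.add_bot _)]
  rfl

theorem degree_neg [Ring R] (f : R[T;T⁻¹]) : (-f).degree = f.degree := by
  rw [degree, degree, AddMonoidAlgebra.coeff_neg, Finsupp.support_neg]

theorem degree_add_le [Semiring R] (f g : R[T;T⁻¹]) :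
    (f + g).degree ≤ f.degree ⊔ g.degree := by
  classical
  exact (Finset.max_mono Finsupp.support_add).trans_eq Finset.max_union

theorem le_degree_of_coeff_ne_zero [Semiring R] {f : R[T;T⁻¹]} {n : ℤ} (h : f.coeff n ≠ 0) :
    n ≤ f.degree :=
  Finset.le_max (Finsupp.mem_support_iff.2 h)

theorem coeff_eq_zero_of_degree_lt [Semiring R] {f : R[T;T⁻¹]} {n : ℤ} (h : f.degree < n) :
    f.coeff n = 0 :=
  Finsupp.notMem_support_iff.1 (Finset.notMem_of_max_lt_coe h)

theorem degree_add_eq_left_of_degree_lt [Semiring R] {f g : R[T;T⁻¹]}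
    (h : g.degree < f.degree) : (f + g).degree = f.degree := by
  refine le_antisymm ((degree_add_le f g).trans_eq (sup_eq_left.2 h.le)) ?_
  obtain ⟨d, hd⟩ := WithBot.ne_bot_iff_exists.1 h.ne_bot
  have hf : f.coeff d ≠ 0 := Finsupp.mem_support_iff.1 (Finset.mem_of_max hd.symm)
  have hg : g.coeff d = 0 := coeff_eq_zero_of_degree_lt (hd ▸ h)
  rw [← hd]
  apply le_degree_of_coeff_ne_zero
  rwa [AddMonoidAlgebra.coeff_add, Finsupp.add_apply, hg, add_zero]

theorem degree_T_sub_T_mul [Ring R] [Nontrivial R] {a b : ℤ} (hab : b < a) {g : R[T;T⁻¹]}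
    (hg : g ≠ 0) : ((T a - T b) * g).degree = a + g.degree := by
  rw [sub_mul, sub_eq_add_neg, degree_add_eq_left_of_degree_lt, degree_T_mul]
  rw [degree_neg, degree_T_mul, degree_T_mul]
  exact WithBot.add_lt_add_right (mt degree_eq_bot_iff.1 hg) (WithBot.coe_lt_coe.2 hab)

end LaurentPolynomial

section

variable {R : Type*} [Ring R] [Nontrivial R]

def JonesRecurrence (V : ℕ → R[T;T⁻¹]) : Prop :=
  ∀ m, V (m + 2) = (T 3 - T 1) * V (m + 1) + T 4 * V m

def StablePair (f g : R[T;T⁻¹]) : Prop :=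
  1 + f.degree < g.degree

theorem StablePair.degree_T3_sub_T1_mul_add_T4_mul {f g : R[T;T⁻¹]} (h : StablePair f g) :
    ((T 3 - T 1) * g + T 4 * f).degree = 3 + g.degree := by
  have hg : g ≠ 0 := mt degree_eq_bot_iff.2 h.ne_bot
  rw [degree_add_eq_left_of_degree_lt, degree_T_sub_T_mul (by norm_num) hg]
  · rfl
  rw [degree_T_sub_T_mul (by norm_num) hg, degree_T_mul,
    show ((4 : ℤ) : WithBot ℤ) + f.degree = 3 + (1 + f.degree) by rw [← add_assoc]; rfl]
  exact WithBot.add_lt_add_left (by simp) h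

namespace JonesRecurrence

variable {V : ℕ → R[T;T⁻¹]}

theorem degree_add_two (hV : JonesRecurrence V) {m : ℕ} (h : StablePair (V m) (V (m + 1))) :
    (V (m + 2)).degree = 3 + (V (m + 1)).degree := by
  rw [hV m, h.degree_T3_sub_T1_mul_add_T4_mul]

theorem stablePair_succ (hV : JonesRecurrence V) {m : ℕ} (h : StablePair (V m) (V (m + 1))) :
    StablePair (V (m + 1)) (V (m + 2)) := by
  rw [StablePair, hV.degree_add_two h]
  exact WithBot.add_lt_add_right h.ne_bot (by norm_num)

theorem stablePair_of_le (hV : JonesRecurrence V) {k m : ℕ}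
    (h : StablePair (V k) (V (k + 1))) (hkm : k ≤ m) : StablePair (V m) (V (m + 1)) :=
  Nat.le_induction h (fun _ _ ↦ hV.stablePair_succ) m hkm

theorem degree_add_of_stablePair (hV : JonesRecurrence V) {k : ℕ}
    (h : StablePair (V k) (V (k + 1))) (n : ℕ) :
    (V (k + 1 + n)).degree = (V (k + 1)).degree + ((3 * n : ℤ) : WithBot ℤ) := by
  induction n with
  | zero => simp
  | succ n ih =>
    rw [show k + 1 + (n + 1) = k + n + 2 by omega,
      hV.degree_add_two (hV.stablePair_of_le h (Nat.le_add_right k n)),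
      show k + n + 1 = k + 1 + n by omega, ih,
      show 3 * ((n + 1 : ℕ) : ℤ) = 3 + 3 * n by push_cast; ring, WithBot.coe_add]
    exact add_left_comm _ _ _

end JonesRecurrence

end

theorem jdeg_eq_degree (f : LaurentPolynomial ℤ) : jdeg f = f.degree := rfl

open LaurentPolynomial in
theorem jones_critical_case_two_a_general (V : ℕ → LaurentPolynomial ℤ)
    (hV : ∀ m : ℕ, V (m + 2) = (T 3 - T 1) * V (m + 1) + T 4 * V m)
    (h0 : V 0 ≠ 0)
    (hcrit : jdeg (V 1) = 1 + jdeg (V 0))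
    (h2 : jdeg (V 2) = 2 + jdeg (V 1)) :
    (∀ m : ℕ, 1 ≤ m → 1 + jdeg (V m) < jdeg (V (m + 1))) ∧
    (∀ m : ℕ, 2 ≤ m → jdeg (V m) = jdeg (V 2) + ((3 * ((m : ℤ) - 2) : ℤ) : WithBot ℤ)) := by
  have hrec : JonesRecurrence V := hV
  simp only [jdeg_eq_degree] at hcrit h2 ⊢
  have hV1 : (V 1).degree ≠ ⊥ := by
    rw [hcrit]
    exact WithBot.add_ne_bot.2 ⟨WithBot.coe_ne_bot, mt degree_eq_bot_iff.1 h0⟩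
  have stable_one : StablePair (V 1) (V 2) := by
    rw [StablePair, h2]
    exact WithBot.add_lt_add_right hV1 (by norm_num)
  refine ⟨fun m hm ↦ hrec.stablePair_of_le stable_one hm, fun m hm ↦ ?_⟩
  obtain ⟨n, rfl⟩ := Nat.exists_eq_add_of_le hm
  rw [show ((2 + n : ℕ) : ℤ) - 2 = n by push_cast; ring]
  exact hrec.degree_add_of_stablePair stable_one n

open LaurentPolynomial in
/-- **Proposition 3.4, Case 2a** (critical case, vanishing coefficient sum, degree
jump by 2). If `V` satisfies the Jones recurrence, `V 0 ≠ 0`, the pair `(V 0, V 1)`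
is critical, the sum of the leading coefficients of `V 0` and `V 1` is `0`, and
`deg V 2 = 2 + deg V 1`, then every pair `(V m, V (m+1))` with `m ≥ 1` is stable and
`deg V m = deg V 2 + 3(m−2)` for `m ≥ 2`. -/
theorem jones_critical_case_two_a (V : ℕ → LaurentPolynomial ℤ)
    (hV : ∀ m : ℕ, V (m + 2) = (T 3 - T 1) * V (m + 1) + T 4 * V m)
    (h0 : V 0 ≠ 0)
    (hcrit : jdeg (V 1) = 1 + jdeg (V 0))
    (hC : jcoeff (V 0) + jcoeff (V 1) = 0)
    (h2 : jdeg (V 2) = 2 + jdeg (V 1)) :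
    (∀ m : ℕ, 1 ≤ m → 1 + jdeg (V m) < jdeg (V (m + 1))) ∧
    (∀ m : ℕ, 2 ≤ m → jdeg (V m) = jdeg (V 2) + ((3 * ((m : ℤ) - 2) : ℤ) : WithBot ℤ)) :=
  jones_critical_case_two_a_general V hV h0 hcrit h2
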